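/- Let σ be a symmetric trilinear form on ℝⁿ (n ≥ 4) with components σ_{ijk}, H^i := Σ_j σ_{jji}, and R̃_{ijkl} := Σ_m (σ_{ikm}σ_{jlm} - σ_{ilm}σ_{jkm}). Set R̃_{ii} := Σ_k R̃_{ikik}. Then for every orthonormal frame {e₁,...,eₙ}: R̃₁₂₁₂ + R̃₁₂₃₄ ≥ (1/2)(R̃₁₁ + R̃₂₂) + ((n-4)/(2(n-2))) Σ_{i=3}^n R̃_{ii} - ((n-3)/(2(n+2))) Σ_k (H^k)². -/

import Mathlib

/-!
Write `σ = τ + δ ⊙ v`, where `(δ ⊙ v)ᵢⱼₖ = δᵢⱼ vₖ + δⱼₖ vᵢ + δᵢₖ vⱼ` is `kroneckerSym v` and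
`v = H / (n + 2)`, so that `τ` is symmetric and traceless. Replacing `σ` by `τ` changes `R̃₁₂₁₂`,
`R̃₁₂₃₄` and the Ricci traces only by terms in `|v|²`, `vᵢ²` and `Σₘ τᵢᵢₘ vₘ`, and the two
constants of the inequality are exactly those for which all of these cancel. For traceless `τ` one has `R̃ᵢᵢ = -Σₖₘ τᵢₖₘ²`, so
what remains is `-((n-4)/(2(n-2))) Σ_{i≥3} R̃ᵢᵢ(τ) ≥ 0` plus, for each `m`,
`½(τ₁₁ₘ + τ₂₂ₘ)² + ½(τ₁₃ₘ + τ₂₄ₘ)² + ½(τ₁₄ₘ - τ₂₃ₘ)² + ½ Σ_{k>4} (τ₁ₖₘ² + τ₂ₖₘ²)`.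
-/

open Finset

namespace CubicForm

variable {n : ℕ}

def IsSymm (σ : Fin n → Fin n → Fin n → ℝ) : Prop :=
  (∀ i j k, σ i j k = σ j i k) ∧ ∀ i j k, σ i j k = σ i k j

def meanCurvature (σ : Fin n → Fin n → Fin n → ℝ) (k : Fin n) : ℝ := ∑ j, σ j j k

def curvature (σ : Fin n → Fin n → Fin n → ℝ) (i j k l : Fin n) : ℝ :=
  ∑ m, (σ i k m * σ j l m - σ i l m * σ j k m)

def ricci (σ : Fin n → Fin n → Fin n → ℝ) (i : Fin n) : ℝ := ∑ k, curvature σ i k i k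

def kroneckerSym (v : Fin n → ℝ) (i j k : Fin n) : ℝ :=
  (if i = j then v k else 0) + (if j = k then v i else 0) + (if i = k then v j else 0)

theorem IsSymm.kroneckerSym (v : Fin n → ℝ) : IsSymm (kroneckerSym v) := by
  constructor <;> intro i j k <;> simp only [CubicForm.kroneckerSym, eq_comm] <;> ring

theorem IsSymm.comm₁₃ {σ : Fin n → Fin n → Fin n → ℝ} (hσ : IsSymm σ) (i j k : Fin n) :
    σ i j k = σ k j i := by
  rw [hσ.1, hσ.2, hσ.1]

theorem IsSymm.add {σ ρ : Fin n → Fin n → Fin n → ℝ} (hσ : IsSymm σ) (hρ : IsSymm ρ) :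
    IsSymm (σ + ρ) :=
  ⟨fun i j k => by simp only [Pi.add_apply, hσ.1 i j k, hρ.1 i j k],
    fun i j k => by simp only [Pi.add_apply, hσ.2 i j k, hρ.2 i j k]⟩

theorem IsSymm.sub {σ ρ : Fin n → Fin n → Fin n → ℝ} (hσ : IsSymm σ) (hρ : IsSymm ρ) :
    IsSymm (σ - ρ) :=
  ⟨fun i j k => by simp only [Pi.sub_apply, hσ.1 i j k, hρ.1 i j k],
    fun i j k => by simp only [Pi.sub_apply, hσ.2 i j k, hρ.2 i j k]⟩

theorem meanCurvature_kroneckerSym (v : Fin n → ℝ) (k : Fin n) :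
    meanCurvature (kroneckerSym v) k = (n + 2) * v k := by
  simp only [meanCurvature, kroneckerSym, ↓reduceIte, sum_add_distrib, sum_const, card_univ,
    Fintype.card_fin, nsmul_eq_mul, sum_ite_eq', mem_univ]
  ring

theorem meanCurvature_add (σ ρ : Fin n → Fin n → Fin n → ℝ) (k : Fin n) :
    meanCurvature (σ + ρ) k = meanCurvature σ k + meanCurvature ρ k :=
  sum_add_distrib

theorem sum_mul_kroneckerSym (f v : Fin n → ℝ) (c d : Fin n) :
    ∑ m, f m * kroneckerSym v c d m
      = (if c = d then ∑ m, f m * v m else 0) + f d * v c + f c * v d := by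
  simp [kroneckerSym, mul_add, sum_add_distrib, mul_ite, sum_ite_eq]

theorem sum_kroneckerSym_mul (f v : Fin n → ℝ) (c d : Fin n) :
    ∑ m, kroneckerSym v c d m * f m
      = (if c = d then ∑ m, f m * v m else 0) + f d * v c + f c * v d := by
  simp only [mul_comm _ (f _), sum_mul_kroneckerSym]

theorem curvature_add_kroneckerSym_of_ne {τ : Fin n → Fin n → Fin n → ℝ} (hτ : IsSymm τ)
    (v : Fin n → ℝ) {a b : Fin n} (hab : a ≠ b) :
    curvature (τ + kroneckerSym v) a b a b
      = curvature τ a b a b + ∑ m, τ a a m * v m + ∑ m, τ b b m * v m + ∑ m, v m ^ 2 + v a ^ 2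
        + v b ^ 2 := by
  simp only [curvature, Pi.add_apply, add_mul, mul_add, sum_add_distrib, sum_sub_distrib,
    sum_mul_kroneckerSym, sum_kroneckerSym_mul]
  simp only [kroneckerSym, hab, hab.symm, ↓reduceIte, add_zero, zero_add, sq]
  rw [hτ.1 b a a, hτ.2 a b a, hτ.1 a b b, hτ.2 b a b]
  ring

theorem curvature_add_kroneckerSym_of_pairwise_ne {τ : Fin n → Fin n → Fin n → ℝ}
    (hτ : IsSymm τ) (v : Fin n → ℝ) {a b c d : Fin n} (hab : a ≠ b) (hac : a ≠ c) (had : a ≠ d)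
    (hbc : b ≠ c) (hbd : b ≠ d) (hcd : c ≠ d) :
    curvature (τ + kroneckerSym v) a b c d = curvature τ a b c d := by
  simp only [curvature, Pi.add_apply, add_mul, mul_add, sum_add_distrib, sum_sub_distrib,
    sum_mul_kroneckerSym, sum_kroneckerSym_mul]
  simp only [kroneckerSym, hab, hac, had, hbc, hbd, hcd, hbc.symm, hbd.symm, hcd.symm, ↓reduceIte,
    add_zero, zero_add, zero_mul]
  rw [hτ.2 b d c, hτ.2 a c d, hτ.comm₁₃ b d a, hτ.comm₁₃ b c a]
  ring

theorem ricci_eq_sum_sub_sum_sq {σ : Fin n → Fin n → Fin n → ℝ} (hσ : IsSymm σ) (a : Fin n) :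
    ricci σ a = ∑ m, σ a a m * meanCurvature σ m - ∑ k, ∑ m, σ a k m ^ 2 := by
  simp only [ricci, curvature, meanCurvature, sum_sub_distrib, mul_sum]
  rw [sum_comm]
  congr 1
  exact sum_congr rfl fun k _ => sum_congr rfl fun m _ => by rw [hσ.1 k a m, sq]

theorem ricci_eq_neg_sum_sq {τ : Fin n → Fin n → Fin n → ℝ} (hτ : IsSymm τ)
    (hτ₀ : ∀ k, meanCurvature τ k = 0) (a : Fin n) :
    ricci τ a = -∑ k, ∑ m, τ a k m ^ 2 := by
  simp [ricci_eq_sum_sub_sum_sq hτ, hτ₀]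

theorem sum_kroneckerSym_mul_self (v : Fin n → ℝ) (a : Fin n) :
    ∑ m, kroneckerSym v a a m * v m = ∑ m, v m ^ 2 + 2 * v a ^ 2 := by
  rw [sum_kroneckerSym_mul]
  simp only [↓reduceIte, sq]
  ring

theorem sum_sum_kroneckerSym_sq (v : Fin n → ℝ) (a : Fin n) :
    ∑ k, ∑ m, kroneckerSym v a k m ^ 2 = 2 * ∑ m, v m ^ 2 + (n + 6) * v a ^ 2 := by
  simp only [sq, sum_mul_kroneckerSym]
  simp only [kroneckerSym, add_mul, ite_mul, zero_mul, sum_add_distrib, sum_ite_irrel,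
    sum_const_zero, sum_ite_eq, sum_ite_eq', mem_univ, ↓reduceIte, sum_const, card_univ,
    Fintype.card_fin, nsmul_eq_mul]
  ring

theorem sum_sum_mul_kroneckerSym {τ : Fin n → Fin n → Fin n → ℝ} (hτ : IsSymm τ)
    (hτ₀ : ∀ k, meanCurvature τ k = 0) (v : Fin n → ℝ) (a : Fin n) :
    ∑ k, ∑ m, τ a k m * kroneckerSym v a k m = 2 * ∑ m, τ a a m * v m := by
  have htr : ∑ k, τ a k k = 0 := (sum_congr rfl fun k _ => hτ.comm₁₃ a k k).trans (hτ₀ a)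
  simp only [sum_mul_kroneckerSym, sum_add_distrib, sum_ite_eq, mem_univ, if_true, ← sum_mul,
    htr, zero_mul, add_zero]
  simp only [hτ.2 a _ a]
  ring

theorem ricci_add_kroneckerSym {τ : Fin n → Fin n → Fin n → ℝ} (hτ : IsSymm τ)
    (hτ₀ : ∀ k, meanCurvature τ k = 0) (v : Fin n → ℝ) (a : Fin n) :
    ricci (τ + kroneckerSym v) a
      = ricci τ a + (n - 2) * ∑ m, τ a a m * v m + n * ∑ m, v m ^ 2 + (n - 2) * v a ^ 2 := by
  have hmean : meanCurvature (τ + kroneckerSym v) = fun m => (n + 2) * v m := by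
    ext m
    rw [meanCurvature_add, hτ₀, meanCurvature_kroneckerSym, zero_add]
  have hdot : ∑ m, (τ + kroneckerSym v) a a m * ((n + 2) * v m)
      = (n + 2) * (∑ m, τ a a m * v m + ∑ m, kroneckerSym v a a m * v m) := by
    rw [mul_add, mul_sum, mul_sum, ← sum_add_distrib]
    exact sum_congr rfl fun m _ => by simp only [Pi.add_apply]; ring
  have hsq : ∑ k, ∑ m, (τ + kroneckerSym v) a k m ^ 2
      = ∑ k, ∑ m, τ a k m ^ 2 + 2 * ∑ k, ∑ m, τ a k m * kroneckerSym v a k m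
        + ∑ k, ∑ m, kroneckerSym v a k m ^ 2 := by
    rw [mul_sum, ← sum_add_distrib, ← sum_add_distrib]
    refine sum_congr rfl fun k _ => ?_
    rw [mul_sum, ← sum_add_distrib, ← sum_add_distrib]
    exact sum_congr rfl fun m _ => by simp only [Pi.add_apply]; ring
  rw [ricci_eq_sum_sub_sum_sq (hτ.add (IsSymm.kroneckerSym v)), ricci_eq_neg_sum_sq hτ hτ₀,
    hmean, hdot, hsq, sum_kroneckerSym_mul_self, sum_sum_mul_kroneckerSym hτ hτ₀,
    sum_sum_kroneckerSym_sq]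
  ring

theorem sum_ricci_add_kroneckerSym {τ : Fin n → Fin n → Fin n → ℝ} (hτ : IsSymm τ)
    (hτ₀ : ∀ k, meanCurvature τ k = 0) (v : Fin n → ℝ) :
    ∑ i, ricci (τ + kroneckerSym v) i = ∑ i, ricci τ i + (n + 2) * (n - 1) * ∑ m, v m ^ 2 := by
  have htr : ∑ i, ∑ m, τ i i m * v m = 0 := by
    rw [sum_comm]
    exact sum_eq_zero fun m _ => by rw [← sum_mul]; exact mul_eq_zero_of_left (hτ₀ m) _
  simp only [ricci_add_kroneckerSym hτ hτ₀, sum_add_distrib, ← mul_sum, htr, sum_const,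
    card_univ, Fintype.card_fin, nsmul_eq_mul]
  ring

theorem exists_eq_traceless_add_kroneckerSym {σ : Fin n → Fin n → Fin n → ℝ} (hσ : IsSymm σ) :
    ∃ τ v, IsSymm τ ∧ (∀ k, meanCurvature τ k = 0) ∧ σ = τ + kroneckerSym v := by
  set v : Fin n → ℝ := fun k => meanCurvature σ k / (n + 2)
  refine ⟨σ - kroneckerSym v, v, hσ.sub (IsSymm.kroneckerSym v), fun k => ?_, by simp⟩
  have hsub : meanCurvature (σ - kroneckerSym v) k
      = meanCurvature σ k - meanCurvature (kroneckerSym v) k :=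
    sum_sub_distrib ..
  rw [hsub, meanCurvature_kroneckerSym, mul_div_cancel₀ _ (by positivity), sub_self]

theorem sq_add_sq_add_sq_add_sq_le_sum_sq (f : Fin n → ℝ) {a b c d : Fin n} (hab : a ≠ b)
    (hac : a ≠ c) (had : a ≠ d) (hbc : b ≠ c) (hbd : b ≠ d) (hcd : c ≠ d) :
    f a ^ 2 + f b ^ 2 + f c ^ 2 + f d ^ 2 ≤ ∑ k, f k ^ 2 := by
  have hsub := sum_le_sum_of_subset_of_nonneg (subset_univ {a, b, c, d})
    fun k _ _ => sq_nonneg (f k)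
  rwa [sum_insert (by simp [hab, hac, had]), sum_insert (by simp [hbc, hbd]),
    sum_pair hcd, ← add_assoc, ← add_assoc] at hsub

theorem half_ricci_add_le_curvature_add_curvature {τ : Fin n → Fin n → Fin n → ℝ}
    (hτ : IsSymm τ) (hτ₀ : ∀ k, meanCurvature τ k = 0) {a b c d : Fin n} (hab : a ≠ b)
    (hac : a ≠ c) (had : a ≠ d) (hbc : b ≠ c) (hbd : b ≠ d) (hcd : c ≠ d) :
    (ricci τ a + ricci τ b) / 2 ≤ curvature τ a b a b + curvature τ a b c d := by
  have hm : ∀ m, 0 ≤ τ a a m * τ b b m - τ a b m * τ b a m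
      + (τ a c m * τ b d m - τ a d m * τ b c m) + (∑ k, τ a k m ^ 2 + ∑ k, τ b k m ^ 2) / 2 :=
    fun m => by
    have ha := sq_add_sq_add_sq_add_sq_le_sum_sq (τ a · m) hab hac had hbc hbd hcd
    have hb := sq_add_sq_add_sq_add_sq_le_sum_sq (τ b · m) hab hac had hbc hbd hcd
    rw [hτ.1 b a m] at hb ⊢
    nlinarith [sq_nonneg (τ a a m + τ b b m), sq_nonneg (τ a c m + τ b d m),
      sq_nonneg (τ a d m - τ b c m)]
  have hsum := sum_nonneg fun m (_ : m ∈ univ) => hm m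
  rw [ricci_eq_neg_sum_sq hτ hτ₀, ricci_eq_neg_sum_sq hτ hτ₀,
    sum_comm (f := fun k m => τ a k m ^ 2), sum_comm (f := fun k m => τ b k m ^ 2)]
  simp only [sum_add_distrib, ← sum_div, curvature, sum_sub_distrib] at hsum ⊢
  linarith

theorem sum_filter_two_le_val {M : Type*} [AddCommGroup M] (hn : 2 ≤ n) (f : Fin n → M) :
    ∑ i ∈ univ.filter (fun i : Fin n => 2 ≤ (i : ℕ)), f i
      = ∑ i, f i - f ⟨0, by omega⟩ - f ⟨1, by omega⟩ := by
  have hlt : univ.filter (fun i : Fin n => ¬ 2 ≤ (i : ℕ)) = {⟨0, by omega⟩, ⟨1, by omega⟩} := by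
    ext i
    simp only [mem_filter, mem_univ, true_and, mem_insert, mem_singleton, Fin.ext_iff]
    omega
  rw [← sum_filter_add_sum_filter_not univ (fun i : Fin n => 2 ≤ (i : ℕ)), hlt,
    sum_pair (by simp [Fin.ext_iff])]
  abel

theorem sum_ricci_le_ricci_add_ricci {τ : Fin n → Fin n → Fin n → ℝ} (hτ : IsSymm τ)
    (hτ₀ : ∀ k, meanCurvature τ k = 0) {a b : Fin n} (hab : a ≠ b) :
    ∑ i, ricci τ i ≤ ricci τ a + ricci τ b := by
  have hneg : ∀ i, 0 ≤ -ricci τ i := fun i => by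
    rw [ricci_eq_neg_sum_sq hτ hτ₀, neg_neg]
    exact sum_nonneg fun k _ => sum_nonneg fun m _ => sq_nonneg _
  have hsub := sum_le_sum_of_subset_of_nonneg (subset_univ {a, b}) fun i _ _ => hneg i
  rw [sum_pair hab, sum_neg_distrib] at hsub
  linarith

theorem curvature_add_curvature_ge {σ : Fin n → Fin n → Fin n → ℝ} (hσ : IsSymm σ)
    (hn : 4 ≤ n)
    {a b c d : Fin n} (hab : a ≠ b) (hac : a ≠ c) (had : a ≠ d)
    (hbc : b ≠ c) (hbd : b ≠ d) (hcd : c ≠ d) :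
    (1 / 2 : ℝ) * (ricci σ a + ricci σ b)
      + ((n : ℝ) - 4) / (2 * ((n : ℝ) - 2)) * (∑ i, ricci σ i - ricci σ a - ricci σ b)
      - ((n : ℝ) - 3) / (2 * ((n : ℝ) + 2)) * ∑ k, meanCurvature σ k ^ 2
      ≤ curvature σ a b a b + curvature σ a b c d := by
  obtain ⟨τ, v, hτ, hτ₀, rfl⟩ := exists_eq_traceless_add_kroneckerSym hσ
  have hn' : (4 : ℝ) ≤ n := by exact_mod_cast hn
  have hn2 : (n : ℝ) - 2 ≠ 0 := by linarith
  have hc : ((n : ℝ) - 4) / (2 * ((n : ℝ) - 2)) * (n - 2) = (n - 4) / 2 := by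
    field_simp
  have hd : ((n : ℝ) - 3) / (2 * ((n : ℝ) + 2)) * (n + 2) ^ 2 = (n - 3) * (n + 2) / 2 := by
    field_simp
  have hH : ∑ k, meanCurvature (τ + kroneckerSym v) k ^ 2 = (n + 2) ^ 2 * ∑ k, v k ^ 2 := by
    simp only [meanCurvature_add, hτ₀, meanCurvature_kroneckerSym, zero_add, mul_pow, mul_sum]
  have hsquares := half_ricci_add_le_curvature_add_curvature hτ hτ₀ hab hac had hbc hbd hcd
  have hrest := mul_nonpos_of_nonneg_of_nonpos
    (div_nonneg (by linarith) (by linarith) : (0 : ℝ) ≤ ((n : ℝ) - 4) / (2 * ((n : ℝ) - 2)))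
    (sub_nonpos.2 (sub_le_iff_le_add'.2 (sum_ricci_le_ricci_add_ricci hτ hτ₀ hab)))
  rw [curvature_add_kroneckerSym_of_ne hτ v hab,
    curvature_add_kroneckerSym_of_pairwise_ne hτ v hab hac had hbc hbd hcd,
    ricci_add_kroneckerSym hτ hτ₀, ricci_add_kroneckerSym hτ hτ₀,
    sum_ricci_add_kroneckerSym hτ hτ₀, hH]
  linear_combination hsquares + hrest
    + ((n + 1) * ∑ m, v m ^ 2 - ∑ m, τ a a m * v m - ∑ m, τ b b m * v m - v a ^ 2 - v b ^ 2) * hc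
    - (∑ m, v m ^ 2) * hd

end CubicForm

/-- Lemma 3.6: for a symmetric trilinear form `σ` on `ℝⁿ` (`n ≥ 4`), with Ricci traces
`R̃_ii = Σ_k R̃_ikik`, one has
`R̃₁₂₁₂ + R̃₁₂₃₄ ≥ (1/2)(R̃₁₁+R̃₂₂) + ((n-4)/(2(n-2))) Σ_{i=3}^n R̃_ii
  - ((n-3)/(2(n+2))) Σ (Hᵏ)²`. -/
theorem stmt_3 {n : ℕ} (hn : 4 ≤ n)
    (T : EuclideanSpace ℝ (Fin n) →ₗ[ℝ] EuclideanSpace ℝ (Fin n) →ₗ[ℝ]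
      EuclideanSpace ℝ (Fin n) →ₗ[ℝ] ℝ)
    (hT1 : ∀ x y z, T x y z = T y x z)
    (hT2 : ∀ x y z, T x y z = T x z y)
    (e : Fin n → EuclideanSpace ℝ (Fin n)) :
    let σ : Fin n → Fin n → Fin n → ℝ := fun i j k => T (e i) (e j) (e k)
    let H : Fin n → ℝ := fun i => ∑ j, σ j j i
    let Rt : Fin n → Fin n → Fin n → Fin n → ℝ :=
      fun i j k l => ∑ m, (σ i k m * σ j l m - σ i l m * σ j k m)
    let Ric : Fin n → ℝ := fun i => ∑ k, Rt i k i k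
    let i₁ : Fin n := ⟨0, by omega⟩
    let i₂ : Fin n := ⟨1, by omega⟩
    (1 / 2 : ℝ) * (Ric i₁ + Ric i₂)
      + (((n : ℝ) - 4) / (2 * ((n : ℝ) - 2)))
          * ∑ i ∈ Finset.univ.filter (fun i : Fin n => 2 ≤ (i : ℕ)), Ric i
      - (((n : ℝ) - 3) / (2 * ((n : ℝ) + 2))) * ∑ k, (H k) ^ 2
      ≤ Rt i₁ i₂ i₁ i₂ + Rt i₁ i₂ ⟨2, by omega⟩ ⟨3, by omega⟩ := by
  intro σ H Rt Ric i₁ i₂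
  have hσ : CubicForm.IsSymm σ := ⟨fun i j k => hT1 _ _ _, fun i j k => hT2 _ _ _⟩
  have key := CubicForm.curvature_add_curvature_ge hσ hn (a := i₁) (b := i₂)
    (c := ⟨2, by omega⟩) (d := ⟨3, by omega⟩) (by simp [i₁, i₂]) (by simp [i₁]) (by simp [i₁])
    (by simp [i₂]) (by simp [i₂]) (by simp)
  rwa [← CubicForm.sum_filter_two_le_val (by omega)] at key
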